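/- arXiv:0911.0696 — 3 statements merged into one kernel-verified Lean document; each statement's English description precedes it below -/
import Mathlib

section
/- Let p be a homogeneous polynomial of degree n ≥ 1 in m variables with nonnegative real coefficients that is H-stable. Then the function (x_1,...,x_m) ↦ p(x_1,...,x_m)^{1/n} is concave on the nonnegative orthant ℝ_{≥0}^m. -/
/-!
Fix `x ≥ 0` and `y > 0`. If `z ∉ ℝ`, multiplying every coordinate of `x + z • y` by
`-(Im z) • I` moves it into the open right half-plane, so by homogeneity and H-stability
`p (x + z • y) ≠ 0`; for real `t > 0` the value `p (x + t • y)` is positive. Hence the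
univariate polynomial `t ↦ p (x + t • y)`, of degree `n` and leading coefficient `p y > 0`,
splits over `ℝ` as `p y * ∏ (λᵢ + t)` with all `λᵢ ≥ 0`. On the open orthant, homogeneity
reduces concavity of `p ^ (1/n)` to `(∏ λᵢ) ^ (1/n) + t ≤ (∏ (λᵢ + t)) ^ (1/n)`, the
superadditivity of the geometric mean, which is AM-GM. The closed orthant follows by
continuity, shifting every point by `ε • 1`.
-/

/-- A multivariate real polynomial is H-stable if it does not vanish at any point
all of whose coordinates have positive real part. -/
def Hstable {σ : Type*} (p : MvPolynomial σ ℝ) : Prop :=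
  ∀ z : σ → ℂ, (∀ i, 0 < (z i).re) → MvPolynomial.aeval z p ≠ 0

open scoped Polynomial

theorem Finsupp.prod_pow_eq_prod_map_toMultiset {α M : Type*} [CommMonoid M] (f : α → M)
    (d : α →₀ ℕ) : (d.prod fun i k => f i ^ k) = (d.toMultiset.map f).prod := by
  rw [Finsupp.toMultiset_map, Finsupp.prod_toMultiset,
    Finsupp.prod_mapDomain_index (fun _ => pow_zero _) (fun _ _ _ => pow_add _ _ _)]

namespace MvPolynomial

variable {σ R : Type*} [CommSemiring R]

theorem aeval_monomial_eq_prod_map_toMultiset {S : Type*} [CommSemiring S] [Algebra R S]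
    (f : σ → S) (d : σ →₀ ℕ) (r : R) :
    aeval f (monomial d r) = algebraMap R S r * (d.toMultiset.map f).prod := by
  rw [aeval_monomial, Finsupp.prod_pow_eq_prod_map_toMultiset]

theorem eval_nonneg_of_coeff_nonneg [PartialOrder R] [IsOrderedRing R] {p : MvPolynomial σ R}
    (hp : ∀ d, 0 ≤ p.coeff d) {x : σ → R} (hx : ∀ i, 0 ≤ x i) : 0 ≤ eval x p := by
  rw [eval_eq]
  exact Finset.sum_nonneg fun d _ =>
    mul_nonneg (hp d) (Finset.prod_nonneg fun i _ => pow_nonneg (hx i) _)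

namespace IsHomogeneous

variable {φ : MvPolynomial σ R} {n : ℕ}

theorem card_toMultiset (hφ : φ.IsHomogeneous n) {d : σ →₀ ℕ} (hd : d ∈ φ.support) :
    Multiset.card d.toMultiset = n := by
  rw [Finsupp.card_toMultiset, hφ.degree_eq_sum_deg_support hd]
  rfl

theorem aeval_smul {S : Type*} [CommSemiring S] [Algebra R S] (hφ : φ.IsHomogeneous n)
    (c : S) (w : σ → S) : MvPolynomial.aeval (c • w) φ = c ^ n * MvPolynomial.aeval w φ := by
  conv_lhs => rw [φ.as_sum]
  conv_rhs => rw [φ.as_sum]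
  simp only [map_sum, aeval_monomial_eq_prod_map_toMultiset, Finset.mul_sum, Pi.smul_apply,
    smul_eq_mul]
  refine Finset.sum_congr rfl fun d hd => ?_
  rw [Multiset.prod_map_mul, Multiset.map_const', Multiset.prod_replicate, hφ.card_toMultiset hd]
  ring

theorem natDegree_aeval_le (hφ : φ.IsHomogeneous n) {f : σ → R[X]}
    (hf : ∀ i, (f i).natDegree ≤ 1) : (MvPolynomial.aeval f φ).natDegree ≤ n := by
  rw [φ.as_sum, map_sum]
  refine Polynomial.natDegree_sum_le_of_forall_le _ _ fun d hd => ?_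
  rw [aeval_monomial_eq_prod_map_toMultiset, Polynomial.algebraMap_eq]
  refine (Polynomial.natDegree_C_mul_le _ _).trans <|
    (Polynomial.natDegree_multiset_prod_le _).trans <|
    (Multiset.sum_le_card_nsmul _ 1 fun _ h => ?_).trans_eq ?_
  · obtain ⟨g, hg, rfl⟩ := Multiset.mem_map.mp h
    obtain ⟨i, -, rfl⟩ := Multiset.mem_map.mp hg
    exact hf i
  · simp [hφ.card_toMultiset hd]

theorem coeff_aeval (hφ : φ.IsHomogeneous n) {f : σ → R[X]}
    (hf : ∀ i, (f i).natDegree ≤ 1) :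
    (MvPolynomial.aeval f φ).coeff n = eval (fun i => (f i).coeff 1) φ := by
  conv_lhs => rw [φ.as_sum]
  conv_rhs => rw [φ.as_sum]
  simp only [map_sum, Polynomial.finsetSum_coeff]
  refine Finset.sum_congr rfl fun d hd => ?_
  rw [aeval_monomial_eq_prod_map_toMultiset, Polynomial.algebraMap_eq, Polynomial.coeff_C_mul,
    ← hφ.card_toMultiset hd, ← Multiset.card_map f, ← mul_one (Multiset.card _),
    Polynomial.coeff_multiset_prod_of_natDegree_le _ _ (by simpa using fun i _ => hf i),
    eval_monomial, Finsupp.prod_pow_eq_prod_map_toMultiset, Multiset.map_map]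
  rfl

end IsHomogeneous

noncomputable def lineRestrict (p : MvPolynomial σ R) (x y : σ → R) : R[X] :=
  aeval (fun i => Polynomial.C (y i) * Polynomial.X + Polynomial.C (x i)) p

theorem aeval_lineRestrict {A : Type*} [CommSemiring A] [Algebra R A] (p : MvPolynomial σ R)
    (x y : σ → R) (z : A) :
    Polynomial.aeval z (p.lineRestrict x y) =
      aeval (fun i => algebraMap R A (x i) + z * algebraMap R A (y i)) p := by
  rw [lineRestrict, comp_aeval_apply]
  congr 2 with i
  simp only [map_add, map_mul, Polynomial.aeval_C, Polynomial.aeval_X]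
  ring

theorem eval_lineRestrict (p : MvPolynomial σ R) (x y : σ → R) (t : R) :
    (p.lineRestrict x y).eval t = eval (x + t • y) p := by
  rw [← Polynomial.coe_aeval_eq_eval, aeval_lineRestrict]
  rfl

theorem IsHomogeneous.natDegree_lineRestrict_le {p : MvPolynomial σ R} {n : ℕ}
    (hp : p.IsHomogeneous n) (x y : σ → R) : (p.lineRestrict x y).natDegree ≤ n :=
  hp.natDegree_aeval_le fun _ => Polynomial.natDegree_linear_le

theorem IsHomogeneous.coeff_lineRestrict {p : MvPolynomial σ R} {n : ℕ}
    (hp : p.IsHomogeneous n) (x y : σ → R) : (p.lineRestrict x y).coeff n = eval y p := by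
  rw [lineRestrict, hp.coeff_aeval fun _ => Polynomial.natDegree_linear_le]
  simp

end MvPolynomial

open Finset in
theorem Real.geom_mean_add_le {ι : Type*} {s : Finset ι} (hs : s.Nonempty) {f g : ι → ℝ}
    (hf : ∀ i ∈ s, 0 ≤ f i) (hg : ∀ i ∈ s, 0 ≤ g i) :
    (∏ i ∈ s, f i) ^ (#s : ℝ)⁻¹ + (∏ i ∈ s, g i) ^ (#s : ℝ)⁻¹ ≤
      (∏ i ∈ s, (f i + g i)) ^ (#s : ℝ)⁻¹ := by
  have hk : (0 : ℝ) < #s := by exact_mod_cast hs.card_pos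
  by_cases hzero : ∃ i ∈ s, f i + g i = 0
  · obtain ⟨i, hi, hfg⟩ := hzero
    have hfi : f i = 0 := by linarith [hf i hi, hg i hi]
    have hgi : g i = 0 := by linarith [hf i hi, hg i hi]
    rw [prod_eq_zero hi hfi, prod_eq_zero hi hgi, Real.zero_rpow (inv_pos.mpr hk).ne',
      add_zero]
    exact Real.rpow_nonneg (prod_nonneg fun j hj => add_nonneg (hf j hj) (hg j hj)) _
  push Not at hzero
  have hpos : ∀ i ∈ s, 0 < f i + g i := fun i hi =>
    (add_nonneg (hf i hi) (hg i hi)).lt_of_ne' (hzero i hi)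
  set G := (∏ i ∈ s, (f i + g i)) ^ (#s : ℝ)⁻¹
  have amgm : ∀ h : ι → ℝ, (∀ i ∈ s, 0 ≤ h i) →
      (∏ i ∈ s, h i) ^ (#s : ℝ)⁻¹ ≤ G * ((∑ i ∈ s, h i / (f i + g i)) / #s) := by
    intro h hh
    have := Real.geom_mean_le_arith_mean s (fun _ => 1) (fun i => h i / (f i + g i))
      (fun _ _ => zero_le_one) (by simpa using hs.card_pos)
      (fun i hi => div_nonneg (hh i hi) (hpos i hi).le)
    simp only [Real.rpow_one, one_mul, sum_const, nsmul_eq_mul, mul_one] at this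
    rw [prod_div_distrib, Real.div_rpow (prod_nonneg hh) (prod_nonneg fun i hi => (hpos i hi).le),
      div_le_iff₀ (Real.rpow_pos_of_pos (prod_pos hpos) _)] at this
    linarith
  calc _ ≤ G * ((∑ i ∈ s, f i / (f i + g i)) / #s) +
          G * ((∑ i ∈ s, g i / (f i + g i)) / #s) := add_le_add (amgm f hf) (amgm g hg)
    _ = G * ((∑ i ∈ s, (f i + g i) / (f i + g i)) / #s) := by
        rw [← mul_add, ← add_div, ← sum_add_distrib]
        simp only [add_div]
    _ = G := by
        rw [sum_congr rfl fun i hi => div_self (hpos i hi).ne', sum_const, nsmul_one,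
          div_self hk.ne', mul_one]

theorem Multiset.prod_rpow_inv_card_add_le {Λ : Multiset ℝ} (hcard : 0 < Multiset.card Λ)
    (hΛ : ∀ l ∈ Λ, 0 ≤ l) {t : ℝ} (ht : 0 ≤ t) :
    Λ.prod ^ (Multiset.card Λ : ℝ)⁻¹ + t ≤
      (Λ.map (· + t)).prod ^ (Multiset.card Λ : ℝ)⁻¹ := by
  have hne : (Finset.univ : Finset Λ).Nonempty := by
    obtain ⟨l, hl⟩ := Multiset.card_pos_iff_exists_mem.mp hcard
    exact ⟨Λ.mkToType l ⟨0, Multiset.count_pos.mpr hl⟩, Finset.mem_univ _⟩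
  have key := Real.geom_mean_add_le hne (f := fun l : Λ => (l : ℝ)) (g := fun _ => t)
    (fun _ _ => hΛ _ Multiset.coe_mem) (fun _ _ => ht)
  rw [Finset.prod_const, Finset.card_univ, Multiset.card_coe,
    Real.pow_rpow_inv_natCast ht hcard.ne'] at key
  simp only [Finset.prod_eq_multiset_prod, Multiset.map_univ_coe] at key
  rwa [← Multiset.map_univ Λ (· + t)]

open Filter Topology in
theorem ConcaveOn.of_continuous_of_add_smul_mem {E : Type*} [AddCommGroup E] [Module ℝ E]
    [TopologicalSpace E] [ContinuousAdd E] [ContinuousSMul ℝ E] {s t : Set E} {f : E → ℝ}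
    (hs : Convex ℝ s) (hf : Continuous f) (ht : ConcaveOn ℝ t f) (v : E)
    (hv : ∀ x ∈ s, ∀ ε : ℝ, 0 < ε → x + ε • v ∈ t) : ConcaveOn ℝ s f := by
  refine ⟨hs, fun x hx y hy a b ha hb hab => ?_⟩
  have hshift (ε : ℝ) : a • (x + ε • v) + b • (y + ε • v) = a • x + b • y + ε • v := by
    rw [smul_add, smul_add, add_add_add_comm, smul_smul, smul_smul, ← add_smul, ← add_mul, hab,
      one_mul]
  have hlim (z : E) : Tendsto (fun ε : ℝ => f (z + ε • v)) (𝓝[>] 0) (𝓝 (f z)) := by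
    have : Continuous fun ε : ℝ => f (z + ε • v) := by fun_prop
    simpa using this.continuousWithinAt.tendsto (x := 0) (s := Set.Ioi 0)
  refine le_of_tendsto_of_tendsto (((hlim x).const_smul a).add ((hlim y).const_smul b))
    (hlim (a • x + b • y)) ?_
  filter_upwards [self_mem_nhdsWithin] with ε hε
  rw [← hshift]
  exact ht.2 (hv x hx ε hε) (hv y hy ε hε) ha hb hab

open MvPolynomial

namespace Hstable

variable {σ : Type*} {p : MvPolynomial σ ℝ} {n : ℕ}

theorem eval_pos (hp : Hstable p) (hcoeff : ∀ d, 0 ≤ p.coeff d) {y : σ → ℝ}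
    (hy : ∀ i, 0 < y i) : 0 < eval y p := by
  refine (eval_nonneg_of_coeff_nonneg hcoeff fun i => (hy i).le).lt_of_ne' fun h => ?_
  refine hp (algebraMap ℝ ℂ ∘ y) (fun i => by simpa using hy i) ?_
  rw [MvPolynomial.aeval_algebraMap_apply, aeval_eq_eval, h, map_zero]

theorem aeval_ne_zero_of_re_mul_pos (hp : Hstable p) (hhom : p.IsHomogeneous n) (u : ℂ)
    {w : σ → ℂ} (hw : ∀ i, 0 < (u * w i).re) : aeval w p ≠ 0 := fun h =>
  hp (u • w) hw (by rw [hhom.aeval_smul, h, mul_zero])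

theorem aeval_add_mul_ne_zero (hp : Hstable p) (hhom : p.IsHomogeneous n) (x : σ → ℝ)
    {y : σ → ℝ} (hy : ∀ i, 0 < y i) {z : ℂ} (hz : z.im ≠ 0) :
    aeval (fun i => (x i : ℂ) + z * y i) p ≠ 0 := by
  refine hp.aeval_ne_zero_of_re_mul_pos hhom (-z.im * Complex.I) fun i => ?_
  have hre : (-z.im * Complex.I * ((x i : ℂ) + z * y i)).re = z.im ^ 2 * y i := by
    simp [Complex.mul_re, Complex.mul_im, sq, mul_assoc]
  rw [hre]
  exact mul_pos (by positivity) (hy i)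

theorem splits_lineRestrict (hp : Hstable p) (hhom : p.IsHomogeneous n) (x : σ → ℝ)
    {y : σ → ℝ} (hy : ∀ i, 0 < y i) : (p.lineRestrict x y).Splits := by
  refine Polynomial.Splits.of_splits_map_of_injective (algebraMap ℝ ℂ).injective
    (IsAlgClosed.splits _) fun z hz => ⟨z.re, Complex.ext rfl ?_⟩
  by_contra hz'
  refine hp.aeval_add_mul_ne_zero hhom x hy (Ne.symm hz') ?_
  have := Polynomial.isRoot_of_mem_roots hz
  rwa [Polynomial.IsRoot, Polynomial.eval_map_algebraMap, aeval_lineRestrict] at this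

theorem exists_eval_add_smul_eq_prod (hp : Hstable p) (hhom : p.IsHomogeneous n)
    (hcoeff : ∀ d, 0 ≤ p.coeff d) {x y : σ → ℝ} (hx : ∀ i, 0 ≤ x i) (hy : ∀ i, 0 < y i) :
    ∃ Λ : Multiset ℝ, Multiset.card Λ = n ∧ (∀ l ∈ Λ, 0 ≤ l) ∧
      ∀ t : ℝ, eval (x + t • y) p = eval y p * (Λ.map (· + t)).prod := by
  set q := p.lineRestrict x y
  have hsplit : q.Splits := hp.splits_lineRestrict hhom x hy
  have hcoeff_n : q.coeff n = eval y p := hhom.coeff_lineRestrict x y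
  have hdeg : q.natDegree = n := Polynomial.natDegree_eq_of_le_of_coeff_ne_zero
    (hhom.natDegree_lineRestrict_le x y) (hcoeff_n ▸ (hp.eval_pos hcoeff hy).ne')
  refine ⟨q.roots.map Neg.neg, ?_, ?_, fun t => ?_⟩
  · rw [Multiset.card_map, ← hsplit.natDegree_eq_card_roots, hdeg]
  · simp only [Multiset.mem_map, forall_exists_index, and_imp, forall_apply_eq_imp_iff₂,
      Left.nonneg_neg_iff]
    intro r hr
    by_contra! hr_pos
    have hroot : eval (x + r • y) p = 0 := by
      rw [← eval_lineRestrict]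
      exact Polynomial.isRoot_of_mem_roots hr
    refine (hp.eval_pos hcoeff fun i => ?_).ne' hroot
    simp only [Pi.add_apply, Pi.smul_apply, smul_eq_mul]
    nlinarith [hx i, hy i]
  · rw [← eval_lineRestrict, hsplit.eval_eq_prod_roots, Polynomial.leadingCoeff, hdeg,
      hcoeff_n, Multiset.map_map]
    simp only [Function.comp_def, neg_add_eq_sub]

theorem concaveOn_eval_rpow_inv (hp : Hstable p) (hhom : p.IsHomogeneous n) (hn : 0 < n)
    (hcoeff : ∀ d, 0 ≤ p.coeff d) :
    ConcaveOn ℝ {x : σ → ℝ | ∀ i, 0 < x i} (fun x => eval x p ^ (n : ℝ)⁻¹) := by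
  refine ⟨fun x hx y hy a b ha hb hab i => convex_Ioi (0 : ℝ) (hx i) (hy i) ha hb hab,
    fun x hx y hy a b ha hb hab => ?_⟩
  set F : (σ → ℝ) → ℝ := fun x => eval x p ^ (n : ℝ)⁻¹
  simp only [smul_eq_mul]
  rcases ha.eq_or_lt with rfl | ha
  · obtain rfl : b = 1 := by linarith
    simp
  have hF_smul (w : σ → ℝ) (hw : ∀ i, 0 ≤ w i) : F (a • w) = a * F w := by
    simp only [F]
    rw [show eval (a • w) p = a ^ n * eval w p from hhom.aeval_smul a w,
      Real.mul_rpow (by positivity) (eval_nonneg_of_coeff_nonneg hcoeff hw),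
      Real.pow_rpow_inv_natCast ha.le hn.ne']
  obtain ⟨Λ, hcard, hΛ, hfac⟩ :=
    hp.exists_eval_add_smul_eq_prod hhom hcoeff (fun i => (hx i).le) hy
  have hline (t : ℝ) (ht : 0 ≤ t) :
      F (x + t • y) = F y * (Λ.map (· + t)).prod ^ (n : ℝ)⁻¹ := by
    simp only [F]
    rw [hfac, Real.mul_rpow (hp.eval_pos hcoeff hy).le (Multiset.prod_nonneg fun _ h => ?_)]
    obtain ⟨l, hl, rfl⟩ := Multiset.mem_map.mp h
    exact add_nonneg (hΛ l hl) ht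
  have hba : 0 ≤ b / a := div_nonneg hb ha.le
  have hsuper := Multiset.prod_rpow_inv_card_add_le (hcard ▸ hn) hΛ hba
  rw [hcard] at hsuper
  have hFy : 0 ≤ F y := Real.rpow_nonneg (hp.eval_pos hcoeff hy).le _
  calc a * F x + b * F y = a * F y * (Λ.prod ^ (n : ℝ)⁻¹ + b / a) := by
        rw [show x = x + (0 : ℝ) • y by simp, hline 0 le_rfl]
        field_simp
        simp
    _ ≤ a * F y * (Λ.map (· + b / a)).prod ^ (n : ℝ)⁻¹ := by gcongr
    _ = F (a • x + b • y) := by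
        rw [mul_assoc, ← hline _ hba, ← hF_smul, smul_add, smul_smul,
          mul_div_cancel₀ _ ha.ne']
        exact fun i => add_nonneg (hx i).le (mul_nonneg hba (hy i).le)

end Hstable

theorem stmt3 {m n : ℕ} (hn : 1 ≤ n) (p : MvPolynomial (Fin m) ℝ)
    (hhom : p.IsHomogeneous n) (hcoeff : ∀ c, 0 ≤ p.coeff c) (hstab : Hstable p) :
    ConcaveOn ℝ {x : Fin m → ℝ | ∀ i, 0 ≤ x i}
      (fun x => (MvPolynomial.eval x p) ^ ((n : ℝ)⁻¹)) := by
  have hcont : Continuous fun x : Fin m → ℝ => MvPolynomial.eval x p ^ (n : ℝ)⁻¹ :=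
    (MvPolynomial.continuous_eval p).rpow_const fun _ => Or.inr (by positivity)
  refine ConcaveOn.of_continuous_of_add_smul_mem (convex_Ici 0) hcont
    (hstab.concaveOn_eval_rpow_inv hhom hn hcoeff) 1 fun x hx ε hε i => ?_
  simpa using add_pos_of_nonneg_of_pos (hx i) hε
end

section
/- Let p be a nonzero homogeneous polynomial of degree n in m variables with nonnegative real coefficients. Then p is H-stable if and only if for all real numbers x_1,...,x_m ≥ 0 and all real numbers y_1,...,y_m, one has |p(x_1 + i·y_1, ..., x_m + i·y_m)| ≥ p(x_1,...,x_m). -/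
open MvPolynomial Complex Set

theorem MvPolynomial.IsHomogeneous.aeval_smul_s5 {σ R S : Type*} [CommSemiring R] [CommSemiring S]
    [Algebra R S] {φ : MvPolynomial σ R} {n : ℕ} (hφ : φ.IsHomogeneous n) (c : S) (x : σ → S) :
    MvPolynomial.aeval (c • x) φ = c ^ n * MvPolynomial.aeval x φ := by
  simp only [aeval_def, eval₂_eq, Finset.mul_sum]
  refine Finset.sum_congr rfl fun d hd => ?_
  have hdeg : ∑ i ∈ d.support, d i = n := by
    simpa [Finsupp.weight_apply, Finsupp.sum] using hφ (mem_support_iff.1 hd)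
  simp only [Pi.smul_apply, smul_eq_mul, mul_pow, Finset.prod_mul_distrib,
    Finset.prod_pow_eq_pow_sum, hdeg]
  ring

theorem MvPolynomial.eval_pos_of_coeff_nonneg {σ R : Type*} [CommSemiring R] [PartialOrder R]
    [IsStrictOrderedRing R] {p : MvPolynomial σ R} (hp : p ≠ 0) (hcoeff : ∀ d, 0 ≤ p.coeff d)
    {x : σ → R} (hx : ∀ i, 0 < x i) : 0 < eval x p := by
  obtain ⟨d, hd⟩ := support_nonempty.2 hp
  rw [eval_eq]
  refine Finset.sum_pos' (fun d _ => mul_nonneg (hcoeff d)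
    (Finset.prod_nonneg fun i _ => pow_nonneg (hx i).le _)) ⟨d, hd, ?_⟩
  exact mul_pos ((hcoeff d).lt_of_ne' (mem_support_iff.1 hd))
    (Finset.prod_pos fun i _ => pow_pos (hx i) _)

theorem MvPolynomial.exists_polynomial_eval_eq_aeval_add_smul {σ R S : Type*} [CommSemiring R]
    [CommSemiring S] [Algebra R S] (p : MvPolynomial σ R) (a b : σ → S) :
    ∃ g : Polynomial S, ∀ s, g.eval s = aeval (a + s • b) p := by
  refine ⟨aeval (fun i => Polynomial.C (a i) + Polynomial.X * Polynomial.C (b i)) p, fun s => ?_⟩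
  rw [← Polynomial.coe_aeval_eq_eval, ← AlgHom.restrictScalars_apply R, comp_aeval_apply]
  congr 2
  funext i
  rw [AlgHom.restrictScalars_apply, Polynomial.coe_aeval_eq_eval]
  simp only [Polynomial.eval_add, Polynomial.eval_mul, Polynomial.eval_C, Polynomial.eval_X,
    Pi.add_apply, Pi.smul_apply, smul_eq_mul]

theorem MvPolynomial.continuous_aeval {σ R S : Type*} [CommSemiring R] [CommSemiring S]
    [Algebra R S] [TopologicalSpace S] [IsTopologicalSemiring S] (p : MvPolynomial σ R) :
    Continuous fun x : σ → S => aeval x p := by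
  simp only [aeval_def, eval₂_eq_eval_map]
  exact continuous_eval _

theorem MvPolynomial.aeval_ofReal {σ : Type*} (p : MvPolynomial σ ℝ) (x : σ → ℝ) :
    aeval (fun i => (x i : ℂ)) p = eval x p := by
  simpa using (comp_aeval_apply x (Algebra.ofId ℝ ℂ) p).symm

theorem Polynomial.norm_eval_le_norm_eval_of_forall_mem_roots {K : Type*} [NormedField K]
    {f : Polynomial K} (hf : f.Splits) {w z : K} (h : ∀ r ∈ f.roots, ‖w - r‖ ≤ ‖z - r‖) :
    ‖f.eval w‖ ≤ ‖f.eval z‖ := by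
  have hnorm (s : Multiset K) : ‖s.prod‖ = (s.map (‖·‖)).prod := map_multiset_prod normHom s
  simp only [hf.eval_eq_prod_roots, norm_mul, hnorm, Multiset.map_map]
  gcongr
  exact Multiset.prod_map_le_prod_map₀ _ _ (fun _ _ => norm_nonneg _) h

theorem Complex.norm_le_norm_one_sub_of_re_nonpos {r : ℂ} (hr : r.re ≤ 0) : ‖r‖ ≤ ‖1 - r‖ := by
  rw [← sq_le_sq₀ (norm_nonneg _) (norm_nonneg _), Complex.sq_norm, Complex.sq_norm,
    normSq_apply, normSq_apply]
  simp only [sub_re, one_re, sub_im, one_im]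
  nlinarith

namespace Hstable

variable {σ : Type*} {p : MvPolynomial σ ℝ} {n : ℕ}

theorem aeval_add_smul_ne_zero (hs : Hstable p) (hhom : p.IsHomogeneous n) {x : σ → ℝ}
    (hx : ∀ i, 0 < x i) (y : σ → ℝ) {r : ℂ} (hr : 0 < r.re) :
    aeval ((fun i => (x i : ℂ)) + r • fun i => (y i : ℂ) * I) p ≠ 0 := by
  have hr0 : r ≠ 0 := fun h => by simp [h] at hr
  have hscale : ((fun i => (x i : ℂ)) + r • fun i => (y i : ℂ) * I) =
      r • fun i => r⁻¹ * x i + y i * I := by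
    funext i
    simp only [Pi.add_apply, Pi.smul_apply, smul_eq_mul]
    field_simp
  rw [hscale, hhom.aeval_smul_s5]
  refine mul_ne_zero (pow_ne_zero _ hr0) (hs _ fun i => ?_)
  simp only [add_re, mul_re, ofReal_re, ofReal_im, I_re, I_im, inv_re]
  have : 0 < r.re / normSq r := div_pos hr (normSq_pos.2 hr0)
  nlinarith [hx i]

theorem eval_le_norm_aeval_of_pos (hs : Hstable p) (hhom : p.IsHomogeneous n) {x : σ → ℝ}
    (hx : ∀ i, 0 < x i) (y : σ → ℝ) :
    eval x p ≤ ‖aeval (fun i => (x i : ℂ) + (y i : ℂ) * I) p‖ := by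
  obtain ⟨g, hg⟩ :=
    exists_polynomial_eval_eq_aeval_add_smul p (fun i => (x i : ℂ)) (fun i => (y i : ℂ) * I)
  have hroots : ∀ r ∈ g.roots, ‖0 - r‖ ≤ ‖1 - r‖ := by
    intro r hr
    rw [zero_sub, norm_neg]
    refine norm_le_norm_one_sub_of_re_nonpos (not_lt.1 fun hre => ?_)
    exact hs.aeval_add_smul_ne_zero hhom hx y hre (hg r ▸ (Polynomial.mem_roots'.1 hr).2)
  calc eval x p ≤ ‖(eval x p : ℂ)‖ := by rw [norm_real]; exact le_abs_self _
    _ = ‖g.eval 0‖ := by rw [hg, zero_smul, add_zero, aeval_ofReal]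
    _ ≤ ‖g.eval 1‖ :=
      Polynomial.norm_eval_le_norm_eval_of_forall_mem_roots (IsAlgClosed.splits g) hroots
    _ = ‖aeval (fun i => (x i : ℂ) + (y i : ℂ) * I) p‖ := by rw [hg, one_smul]; rfl

theorem eval_le_norm_aeval (hs : Hstable p) (hhom : p.IsHomogeneous n) {x : σ → ℝ}
    (hx : ∀ i, 0 ≤ x i) (y : σ → ℝ) :
    eval x p ≤ ‖aeval (fun i => (x i : ℂ) + (y i : ℂ) * I) p‖ := by
  have hclosed :
      IsClosed {x : σ → ℝ | eval x p ≤ ‖aeval (fun i => (x i : ℂ) + (y i : ℂ) * I) p‖} :=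
    isClosed_le (continuous_eval p)
      (continuous_norm.comp ((continuous_aeval p).comp (by fun_prop)))
  have hpos : univ.pi (fun _ => Ioi (0 : ℝ)) ⊆ _ := fun x hx =>
    hs.eval_le_norm_aeval_of_pos hhom (by simpa using hx) y
  have hnonneg := hclosed.closure_subset_iff.2 hpos
  rw [closure_pi_set] at hnonneg
  exact hnonneg fun i _ => by simpa [closure_Ioi] using hx i

end Hstable

theorem stmt5 {m n : ℕ} (p : MvPolynomial (Fin m) ℝ) (hp : p ≠ 0)
    (hhom : p.IsHomogeneous n) (hcoeff : ∀ c, 0 ≤ p.coeff c) :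
    Hstable p ↔
      ∀ x y : Fin m → ℝ, (∀ i, 0 ≤ x i) →
        MvPolynomial.eval x p ≤
          ‖(MvPolynomial.aeval
            (fun i => (x i : ℂ) + (y i : ℂ) * Complex.I) p)‖ := by
  refine ⟨fun hs x y hx => hs.eval_le_norm_aeval hhom hx y, fun h z hz hzero => ?_⟩
  have hpos := eval_pos_of_coeff_nonneg hp hcoeff (x := fun i => (z i).re) hz
  have hle := h (fun i => (z i).re) (fun i => (z i).im) fun i => (hz i).le
  simp only [re_add_im, hzero, norm_zero] at hle
  exact hle.not_gt hpos
end

section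
/- Let (p_i)_{i ∈ ℕ} be a sequence of homogeneous polynomials, all of degree n in m variables with nonnegative real coefficients, each of which is H-stable, and suppose the coefficients of p_i converge to those of a polynomial p as i → ∞ (equivalently, p_i(z) → p(z) for every z ∈ ℂ^m). Then p is either identically zero or H-stable. -/
open Filter Topology Polynomial

namespace Polynomial

theorem coeff_prod_sum_of_natDegree_le {ι R : Type*} [CommSemiring R] (s : Finset ι)
    (f : ι → R[X]) (d : ι → ℕ) (h : ∀ i ∈ s, (f i).natDegree ≤ d i) :
    (∏ i ∈ s, f i).coeff (∑ i ∈ s, d i) = ∏ i ∈ s, (f i).coeff (d i) := by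
  classical
  induction s using Finset.induction with
  | empty => simp
  | insert a s ha ih =>
    have hs : ∀ i ∈ s, (f i).natDegree ≤ d i := fun i hi => h i (Finset.mem_insert_of_mem hi)
    rw [Finset.prod_insert ha, Finset.sum_insert ha, Finset.prod_insert ha,
      coeff_mul_add_eq_of_natDegree_le (h a (Finset.mem_insert_self a s))
        ((natDegree_prod_le _ _).trans (Finset.sum_le_sum hs)), ih hs]

theorem norm_coeff_le_norm_eval_one_of_re_roots_nonpos {f : ℂ[X]} {n : ℕ} (hn : f.natDegree ≤ n)
    (hroots : ∀ r ∈ f.roots, r.re ≤ 0) : ‖f.coeff n‖ ≤ ‖f.eval 1‖ := by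
  have hlead : ‖f.coeff n‖ ≤ ‖f.leadingCoeff‖ := by
    rcases hn.lt_or_eq with hlt | rfl
    · simp [coeff_eq_zero_of_natDegree_lt hlt]
    · rfl
  have hfactor : 1 ≤ (f.roots.map fun r => ‖1 - r‖).prod :=
    Multiset.one_le_prod fun _ hx => by
      obtain ⟨r, hr, rfl⟩ := Multiset.mem_map.mp hx
      calc (1 : ℝ) ≤ (1 - r).re := by simp [hroots r hr]
        _ ≤ ‖1 - r‖ := Complex.re_le_norm _
  have hnorm (s : Multiset ℂ) : ‖s.prod‖ = (s.map (‖·‖)).prod := map_multiset_prod normHom s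
  conv_rhs =>
    rw [← C_leadingCoeff_mul_prod_multiset_X_sub_C (IsAlgClosed.card_roots_eq_natDegree (p := f))]
  rw [eval_mul, eval_C, norm_mul, eval_multiset_prod, hnorm, Multiset.map_map,
    Multiset.map_map]
  simp only [Function.comp_def, eval_sub, eval_X, eval_C]
  exact hlead.trans (le_mul_of_one_le_right (norm_nonneg _) hfactor)

end Polynomial

namespace MvPolynomial

section Line

variable {σ R S : Type*} [CommSemiring R] [CommSemiring S] [Algebra R S]

/-- `p (a s + b)` as a polynomial in `s`. -/
noncomputable def restrictLine (a b : σ → S) : MvPolynomial σ R →ₐ[R] S[X] :=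
  aeval fun j => Polynomial.C (a j) * Polynomial.X + Polynomial.C (b j)

variable (a b : σ → S)

theorem eval_restrictLine (p : MvPolynomial σ R) (s : S) :
    (restrictLine a b p).eval s = aeval (fun j => a j * s + b j) p := by
  rw [restrictLine, aeval_def, polynomial_eval_eval₂, aeval_def]
  congr 1
  · ext; simp
  · simp

theorem restrictLine_monomial (d : σ →₀ ℕ) (r : R) :
    restrictLine a b (monomial d r) = Polynomial.C (algebraMap R S r) *
      ∏ j ∈ d.support, (Polynomial.C (a j) * Polynomial.X + Polynomial.C (b j)) ^ d j := by
  rw [restrictLine, aeval_monomial, Polynomial.algebraMap_apply, Finsupp.prod]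

theorem natDegree_restrictLine_monomial_le (d : σ →₀ ℕ) (r : R) :
    (restrictLine a b (monomial d r)).natDegree ≤ d.degree := by
  rw [restrictLine_monomial, Finsupp.degree_apply]
  refine (Polynomial.natDegree_C_mul_le _ _).trans <| (Polynomial.natDegree_prod_le _ _).trans <|
    Finset.sum_le_sum fun j _ => ?_
  exact (Polynomial.natDegree_pow_le_of_le _ Polynomial.natDegree_linear_le).trans_eq (mul_one _)

theorem coeff_restrictLine_monomial_degree (d : σ →₀ ℕ) (r : R) :
    (restrictLine a b (monomial d r)).coeff d.degree = aeval a (monomial d r) := by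
  rw [restrictLine_monomial, Polynomial.coeff_C_mul, Finsupp.degree_apply,
    Polynomial.coeff_prod_sum_of_natDegree_le _ _ _ fun j _ =>
      (Polynomial.natDegree_pow_le_of_le _ Polynomial.natDegree_linear_le).trans_eq (mul_one _),
    aeval_monomial, Finsupp.prod]
  congr 1
  refine Finset.prod_congr rfl fun j _ => ?_
  simpa using Polynomial.coeff_pow_of_natDegree_le (m := d j)
    (Polynomial.natDegree_linear_le (a := a j) (b := b j))

variable {a b} {p : MvPolynomial σ R} {n : ℕ}

theorem IsHomogeneous.degree_eq_of_mem_support (hp : p.IsHomogeneous n) {d : σ →₀ ℕ}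
    (hd : d ∈ p.support) : d.degree = n := by
  by_contra h
  exact mem_support_iff.mp hd (hp.coeff_eq_zero h)

theorem IsHomogeneous.natDegree_restrictLine_le (hp : p.IsHomogeneous n) :
    (restrictLine a b p).natDegree ≤ n := by
  rw [p.as_sum, map_sum]
  refine Polynomial.natDegree_sum_le_of_forall_le _ _ fun d hd => ?_
  exact (natDegree_restrictLine_monomial_le a b d _).trans_eq (hp.degree_eq_of_mem_support hd)

theorem IsHomogeneous.coeff_restrictLine (hp : p.IsHomogeneous n) :
    (restrictLine a b p).coeff n = MvPolynomial.aeval a p := by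
  conv_lhs => rw [p.as_sum]
  conv_rhs => rw [p.as_sum]
  rw [map_sum, map_sum, Polynomial.finsetSum_coeff]
  refine Finset.sum_congr rfl fun d hd => ?_
  rw [← hp.degree_eq_of_mem_support hd, coeff_restrictLine_monomial_degree]

theorem IsHomogeneous.support_subset_finsuppAntidiag [Fintype σ] [DecidableEq σ]
    (hp : p.IsHomogeneous n) : p.support ⊆ Finset.univ.finsuppAntidiag n := fun d hd =>
  Finset.mem_finsuppAntidiag.mpr
    ⟨by rw [← Finsupp.degree_eq_sum, hp.degree_eq_of_mem_support hd], Finset.subset_univ _⟩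

end Line

section Limit

variable {σ R A ι : Type*} [CommSemiring R] [CommSemiring A] [Algebra R A]
  {s : Finset (σ →₀ ℕ)}

theorem aeval_eq_sum_of_support_subset {p : MvPolynomial σ R} (hp : p.support ⊆ s) (z : σ → A) :
    aeval z p = ∑ d ∈ s, p.coeff d • aeval z (monomial d (1 : R)) := by
  have hmonomial_posmial (d : σ →₀ ℕ) :
      aeval z (monomial d (p.coeff d)) = p.coeff d • aeval z (monomial d (1 : R)) := by
    rw [← map_smul, smul_monomial, smul_eq_mul, mul_one]
  conv_lhs => rw [p.as_sum]
  rw [map_sum]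
  simp only [hmonomial_posmial]
  exact Finset.sum_subset hp fun d _ hd => by simp [notMem_support_iff.mp hd]

variable [TopologicalSpace R] {l : Filter ι} {p : ι → MvPolynomial σ R} {q : MvPolynomial σ R}

theorem support_subset_of_tendsto_coeff [T2Space R] [l.NeBot] (hs : ∀ i, (p i).support ⊆ s)
    (h : ∀ d, Tendsto (fun i => (p i).coeff d) l (𝓝 (q.coeff d))) : q.support ⊆ s := by
  intro d hd
  by_contra hds
  refine mem_support_iff.mp hd (tendsto_nhds_unique (h d) ?_)
  simp [notMem_support_iff.mp fun hdi => hds (hs _ hdi)]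

theorem tendsto_aeval_of_tendsto_coeff [TopologicalSpace A] [IsTopologicalSemiring A]
    [ContinuousSMul R A] (hs : ∀ i, (p i).support ⊆ s) (hq : q.support ⊆ s)
    (h : ∀ d, Tendsto (fun i => (p i).coeff d) l (𝓝 (q.coeff d))) (z : σ → A) :
    Tendsto (fun i => aeval z (p i)) l (𝓝 (aeval z q)) := by
  simp only [aeval_eq_sum_of_support_subset (hs _), aeval_eq_sum_of_support_subset hq]
  exact tendsto_finsetSum _ fun d _ => (h d).smul_const _

end Limit

theorem eval_pos_of_coeff_nonneg_s6 {σ R : Type*} [CommSemiring R] [LinearOrder R]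
    [IsStrictOrderedRing R] {p : MvPolynomial σ R} (hp : p ≠ 0) (hc : ∀ d, 0 ≤ p.coeff d)
    {x : σ → R} (hx : ∀ j, 0 < x j) : 0 < eval x p := by
  obtain ⟨d, hd⟩ := ne_zero_iff.mp hp
  have hmonomial_pos (d : σ →₀ ℕ) : 0 < d.prod fun j e => x j ^ e :=
    Finset.prod_pos fun j _ => pow_pos (hx j) _
  rw [eval_eq]
  exact Finset.sum_pos' (fun d _ => mul_nonneg (hc d) (hmonomial_pos d).le)
    ⟨d, mem_support_iff.mpr hd, mul_pos ((hc d).lt_of_ne' hd) (hmonomial_pos d)⟩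

end MvPolynomial

theorem Hstable.norm_aeval_re_le {σ : Type*} {p : MvPolynomial σ ℝ} {n : ℕ} (hs : Hstable p)
    (hp : p.IsHomogeneous n) (z : σ → ℂ) (hz : ∀ j, 0 < (z j).re) :
    ‖MvPolynomial.aeval (fun j => ((z j).re : ℂ)) p‖ ≤ ‖MvPolynomial.aeval z p‖ := by
  set f := MvPolynomial.restrictLine (fun j => ((z j).re : ℂ)) (fun j => (z j).im * Complex.I) p
  have hroots : ∀ r ∈ f.roots, r.re ≤ 0 := by
    intro r hr
    by_contra! hre
    refine hs _ (fun j => ?_)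
      ((MvPolynomial.eval_restrictLine _ _ p r).symm.trans (mem_roots'.mp hr).2)
    simpa using mul_pos (hz j) hre
  calc ‖MvPolynomial.aeval (fun j => ((z j).re : ℂ)) p‖ = ‖f.coeff n‖ := by
        rw [hp.coeff_restrictLine]
    _ ≤ ‖f.eval 1‖ :=
        norm_coeff_le_norm_eval_one_of_re_roots_nonpos hp.natDegree_restrictLine_le hroots
    _ = ‖MvPolynomial.aeval z p‖ := by simp [f, MvPolynomial.eval_restrictLine, Complex.re_add_im]

theorem stmt6 {m n : ℕ} (p : ℕ → MvPolynomial (Fin m) ℝ) (q : MvPolynomial (Fin m) ℝ)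
    (hhom : ∀ i, (p i).IsHomogeneous n) (hcoeff : ∀ i c, 0 ≤ (p i).coeff c)
    (hstab : ∀ i, Hstable (p i))
    (hconv : ∀ c : Fin m →₀ ℕ,
      Filter.Tendsto (fun i => (p i).coeff c) Filter.atTop (nhds (q.coeff c))) :
    q = 0 ∨ Hstable q := by
  classical
  refine or_iff_not_imp_left.mpr fun hq z hz hqz => ?_
  have hsupp i := (hhom i).support_subset_finsuppAntidiag
  have hlim := MvPolynomial.tendsto_aeval_of_tendsto_coeff (A := ℂ) hsupp
    (MvPolynomial.support_subset_of_tendsto_coeff hsupp hconv) hconv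
  have hle : ‖MvPolynomial.aeval (fun j => ((z j).re : ℂ)) q‖ ≤ ‖MvPolynomial.aeval z q‖ :=
    le_of_tendsto_of_tendsto' (hlim _).norm (hlim z).norm fun i =>
      (hstab i).norm_aeval_re_le (hhom i) z hz
  have hpos : 0 < MvPolynomial.eval (fun j => (z j).re) q :=
    MvPolynomial.eval_pos_of_coeff_nonneg_s6 hq
      (fun c => ge_of_tendsto' (hconv c) fun i => hcoeff i c) hz
  rw [hqz, norm_zero, norm_le_zero_iff] at hle
  exact hpos.ne' ((MvPolynomial.aeval_algebraMap_eq_zero_iff ℂ _ q).mp hle)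
end
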